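/- arXiv:2007.05143 — 6 statements merged into one kernel-verified Lean document; each statement's English description precedes it below -/
import Mathlib

section
/- Let $(A,I)$ be a Dorroh pair of algebras, $Z\subseteq B$ two-sided ideals of $A$, $J$ an $A$-subbimodule and subalgebra of $I$, and $\varphi: J\to B/Z$ a surjective linear map that is both an $A$-bimodule homomorphism and an algebra homomorphism, such that whenever $\varphi(x)=a+Z$ one has $ay-xy\in\ker\varphi$ and $ya-yx\in\ker\varphi$ for all $y\in I$. Then the set $K=\{(a,-x)\in A\ltimes_d I : a\in B,\ x\in J,\ \varphi(x)=a+Z\}$ is a two-sided ideal of $A\ltimes_d I$. -/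
/-- The Dorroh multiplication on `A × I` for a Dorroh pair of algebras `(A, I)`. -/
def dorrohMul {k : Type*} [Field k] {A I : Type*} [AddCommGroup A] [Module k A]
    [AddCommGroup I] [Module k I]
    (mA : A →ₗ[k] A →ₗ[k] A) (mI : I →ₗ[k] I →ₗ[k] I)
    (l : A →ₗ[k] I →ₗ[k] I) (r : I →ₗ[k] A →ₗ[k] I) (p q : A × I) : A × I :=
  (mA p.1 q.1, l p.1 q.2 + r p.2 q.1 + mI p.2 q.2)

theorem stmt3 {k : Type*} [Field k] {A I : Type*} [AddCommGroup A] [Module k A]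
    [AddCommGroup I] [Module k I]
    (mA : A →ₗ[k] A →ₗ[k] A) (mI : I →ₗ[k] I →ₗ[k] I)
    (l : A →ₗ[k] I →ₗ[k] I) (r : I →ₗ[k] A →ₗ[k] I)
    (hA : ∀ a b c : A, mA (mA a b) c = mA a (mA b c))
    (hI : ∀ x y z : I, mI (mI x y) z = mI x (mI y z))
    (hll : ∀ (a b : A) (x : I), l (mA a b) x = l a (l b x))
    (hrr : ∀ (x : I) (a b : A), r (r x a) b = r x (mA a b))
    (hlr : ∀ (a : A) (x : I) (b : A), r (l a x) b = l a (r x b))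
    (h1 : ∀ (a : A) (x y : I), l a (mI x y) = mI (l a x) y)
    (h2 : ∀ (x : I) (a : A) (y : I), mI (r x a) y = mI x (l a y))
    (h3 : ∀ (x y : I) (a : A), r (mI x y) a = mI x (r y a))
    -- `Z ⊆ B` are two-sided ideals of `A`
    (Z B : Submodule k A) (hZB : Z ≤ B)
    (hZ : ∀ z ∈ Z, ∀ a : A, mA a z ∈ Z ∧ mA z a ∈ Z)
    (hB : ∀ b ∈ B, ∀ a : A, mA a b ∈ B ∧ mA b a ∈ B)
    -- `J` is an `A`-subbimodule and a subalgebra of `I`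
    (J : Submodule k I)
    (hJmod : ∀ x ∈ J, ∀ a : A, l a x ∈ J ∧ r x a ∈ J)
    (hJalg : ∀ x ∈ J, ∀ y ∈ J, mI x y ∈ J)
    -- `φ : J → B/Z` is a surjective linear map
    (φ : ↥J →ₗ[k] A ⧸ Z)
    (hsurj : LinearMap.range φ = Submodule.map Z.mkQ B)
    -- `φ` is an `A`-bimodule homomorphism
    (hbimod : ∀ (a b : A) (x : ↥J), φ x = Z.mkQ b →
      (∀ h : l a ↑x ∈ J, φ ⟨l a ↑x, h⟩ = Z.mkQ (mA a b)) ∧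
      (∀ h : r ↑x a ∈ J, φ ⟨r ↑x a, h⟩ = Z.mkQ (mA b a)))
    -- `φ` is an algebra homomorphism
    (halg : ∀ (a b : A) (x y : ↥J), φ x = Z.mkQ a → φ y = Z.mkQ b →
      ∀ h : mI ↑x ↑y ∈ J, φ ⟨mI ↑x ↑y, h⟩ = Z.mkQ (mA a b))
    -- whenever `φ(x) = a + Z`, one has `ay - xy ∈ ker φ` and `ya - yx ∈ ker φ`
    (hker : ∀ (a : A) (x : ↥J), φ x = Z.mkQ a → ∀ y : I,
      (∃ h : l a y - mI ↑x y ∈ J, φ ⟨l a y - mI ↑x y, h⟩ = 0) ∧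
      (∃ h : r y a - mI y ↑x ∈ J, φ ⟨r y a - mI y ↑x, h⟩ = 0)) :
    -- then `K = {(a,-x) | a ∈ B, x ∈ J, φ(x) = a + Z}` is a two-sided ideal of `A ⋉ I`
    (let Kset : Set (A × I) :=
      {p | p.1 ∈ B ∧ ∃ h : -p.2 ∈ J, φ ⟨-p.2, h⟩ = Z.mkQ p.1}
    -- `K` is a linear subspace
    ((0 : A × I) ∈ Kset ∧ (∀ p ∈ Kset, ∀ q ∈ Kset, p + q ∈ Kset) ∧
      (∀ c : k, ∀ p ∈ Kset, c • p ∈ Kset)) ∧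
    -- `K` absorbs multiplication on both sides
    (∀ p ∈ Kset, ∀ q : A × I,
      dorrohMul mA mI l r p q ∈ Kset ∧ dorrohMul mA mI l r q p ∈ Kset)) := by
  intro Kset
  constructor
  · refine ⟨⟨B.zero_mem, ?_⟩, ?_, ?_⟩
    · have h0 : -(0 : A × I).2 ∈ J := by simpa using J.zero_mem
      refine ⟨h0, ?_⟩
      have e : (⟨-(0 : A × I).2, h0⟩ : J) = 0 := Subtype.ext (by simp)
      rw [e, map_zero]
      simp
    · rintro p ⟨hp1, hpJ, hpφ⟩ q ⟨hq1, hqJ, hqφ⟩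
      refine ⟨B.add_mem hp1 hq1, ?_⟩
      have hm : -(p + q).2 ∈ J := by
        show -(p.2 + q.2) ∈ J
        rw [neg_add]
        exact J.add_mem hpJ hqJ
      refine ⟨hm, ?_⟩
      have e : (⟨-(p + q).2, hm⟩ : J) = ⟨-p.2, hpJ⟩ + ⟨-q.2, hqJ⟩ :=
        Subtype.ext (by simp [neg_add]; abel)
      rw [e, map_add, hpφ, hqφ, ← map_add]
      rfl
    · rintro c p ⟨hp1, hpJ, hpφ⟩
      refine ⟨B.smul_mem c hp1, ?_⟩
      have hm : -(c • p).2 ∈ J := by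
        simpa [smul_neg] using J.smul_mem c hpJ
      refine ⟨hm, ?_⟩
      have e : (⟨-(c • p).2, hm⟩ : J) = c • (⟨-p.2, hpJ⟩ : J) :=
        Subtype.ext (by simp [smul_neg])
      rw [e, map_smul, hpφ, ← map_smul]
      rfl
  · rintro p ⟨hp1, hpJ, hpφ⟩ q
    set u : ↥J := ⟨-p.2, hpJ⟩ with hu
    constructor
    · -- p * q
      refine ⟨(hB p.1 hp1 q.1).2, ?_⟩
      obtain ⟨hk1, hk1φ⟩ := (hker p.1 u hpφ q.2).1
      have hrmem : r (-p.2) q.1 ∈ J := (hJmod (-p.2) hpJ q.1).2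
      have hm : -(dorrohMul mA mI l r p q).2 ∈ J := by
        have : -(dorrohMul mA mI l r p q).2
            = r (-p.2) q.1 - (l p.1 q.2 - mI (↑u) q.2) := by
          simp only [dorrohMul, hu, map_neg, LinearMap.neg_apply]
          abel
        rw [this]
        exact J.sub_mem hrmem hk1
      refine ⟨hm, ?_⟩
      have e : (⟨-(dorrohMul mA mI l r p q).2, hm⟩ : J)
          = ⟨r (↑u) q.1, hrmem⟩ - ⟨l p.1 q.2 - mI (↑u) q.2, hk1⟩ :=
        Subtype.ext (by
          simp only [dorrohMul, hu, AddSubgroupClass.coe_sub, map_neg,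
            LinearMap.neg_apply]
          abel)
      rw [e, map_sub, hk1φ, sub_zero, (hbimod q.1 p.1 u hpφ).2 hrmem]
      rfl
    · -- q * p
      refine ⟨(hB p.1 hp1 q.1).1, ?_⟩
      obtain ⟨hk2, hk2φ⟩ := (hker p.1 u hpφ q.2).2
      have hlmem : l q.1 (-p.2) ∈ J := (hJmod (-p.2) hpJ q.1).1
      have hm : -(dorrohMul mA mI l r q p).2 ∈ J := by
        have : -(dorrohMul mA mI l r q p).2
            = l q.1 (-p.2) - (r q.2 p.1 - mI q.2 (↑u)) := by
          simp only [dorrohMul, hu, map_neg, LinearMap.neg_apply]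
          abel
        rw [this]
        exact J.sub_mem hlmem hk2
      refine ⟨hm, ?_⟩
      have e : (⟨-(dorrohMul mA mI l r q p).2, hm⟩ : J)
          = ⟨l q.1 (↑u), hlmem⟩ - ⟨r q.2 p.1 - mI q.2 (↑u), hk2⟩ :=
        Subtype.ext (by
          simp only [dorrohMul, hu, AddSubgroupClass.coe_sub, map_neg,
            LinearMap.neg_apply]
          abel)
      rw [e, map_sub, hk2φ, sub_zero, (hbimod q.1 p.1 u hpφ).1 hlmem]
      rfl
end

section
/- Let $(A,I)$ be a Dorroh pair of algebras and $K$ a two-sided ideal of $A\ltimes_d I$. With $B=\pi_A(K)$, $J=\pi_I(K)$, $Z=\{a : (a,0)\in K\}$, $L=\{x : (0,x)\in K\}$, the subspace $(Z,L)=\{(z,x) : z\in Z, x\in L\}$ is a two-sided ideal of the (nonunital) algebra $K$, and there is an algebra isomorphism $K/(Z,L)\cong B/Z$ induced by the projection $\pi_A$. -/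
theorem stmt4 {k : Type*} [Field k] {A I : Type*} [AddCommGroup A] [Module k A]
    [AddCommGroup I] [Module k I]
    (mA : A →ₗ[k] A →ₗ[k] A) (mI : I →ₗ[k] I →ₗ[k] I)
    (l : A →ₗ[k] I →ₗ[k] I) (r : I →ₗ[k] A →ₗ[k] I)
    (hA : ∀ a b c : A, mA (mA a b) c = mA a (mA b c))
    (hI : ∀ x y z : I, mI (mI x y) z = mI x (mI y z))
    (hll : ∀ (a b : A) (x : I), l (mA a b) x = l a (l b x))
    (hrr : ∀ (x : I) (a b : A), r (r x a) b = r x (mA a b))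
    (hlr : ∀ (a : A) (x : I) (b : A), r (l a x) b = l a (r x b))
    (h1 : ∀ (a : A) (x y : I), l a (mI x y) = mI (l a x) y)
    (h2 : ∀ (x : I) (a : A) (y : I), mI (r x a) y = mI x (l a y))
    (h3 : ∀ (x y : I) (a : A), r (mI x y) a = mI x (r y a))
    -- `K` is a two-sided ideal of `A ⋉ I`
    (K : Submodule k (A × I))
    (hK : ∀ p ∈ K, ∀ q : A × I, dorrohMul mA mI l r p q ∈ K ∧ dorrohMul mA mI l r q p ∈ K) :
    -- `Z = {a | (a,0) ∈ K}`, `L = {x | (0,x) ∈ K}`, `B = π_A(K)`: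
    -- `(Z,L)` is a two-sided ideal of the (nonunital) algebra `K`
    (∀ p ∈ K, p ∈ Submodule.prod (Submodule.comap (LinearMap.inl k A I) K)
        (Submodule.comap (LinearMap.inr k A I) K) →
      ∀ q ∈ K,
        dorrohMul mA mI l r p q ∈ Submodule.prod (Submodule.comap (LinearMap.inl k A I) K)
          (Submodule.comap (LinearMap.inr k A I) K) ∧
        dorrohMul mA mI l r q p ∈ Submodule.prod (Submodule.comap (LinearMap.inl k A I) K)
          (Submodule.comap (LinearMap.inr k A I) K)) ∧
    -- and the projection `π_A` induces an algebra isomorphism `K/(Z,L) ≅ B/Z`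
    ∃ e : (↥K ⧸ Submodule.comap K.subtype
        (Submodule.prod (Submodule.comap (LinearMap.inl k A I) K)
          (Submodule.comap (LinearMap.inr k A I) K))) ≃ₗ[k]
        ↥(Submodule.map (Submodule.comap (LinearMap.inl k A I) K).mkQ
          (Submodule.map (LinearMap.fst k A I) K)),
      -- `e` is induced by `π_A`
      (∀ p : ↥K, ((e (Submodule.Quotient.mk p) : _) : A ⧸ Submodule.comap (LinearMap.inl k A I) K)
        = (Submodule.comap (LinearMap.inl k A I) K).mkQ (↑p : A × I).1) ∧
      -- `e` is multiplicative (the product of `B/Z` being induced by that of `A`)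
      (∀ p q : ↥K, ∀ h : dorrohMul mA mI l r ↑p ↑q ∈ K,
        ((e (Submodule.Quotient.mk ⟨dorrohMul mA mI l r ↑p ↑q, h⟩) : _)
            : A ⧸ Submodule.comap (LinearMap.inl k A I) K)
          = (Submodule.comap (LinearMap.inl k A I) K).mkQ (mA (↑p : A × I).1 (↑q : A × I).1)) := by
  classical
  set Z := Submodule.comap (LinearMap.inl k A I) K with hZdef
  set L := Submodule.comap (LinearMap.inr k A I) K with hLdef
  have memZ : ∀ a : A, a ∈ Z ↔ ((a, (0:I)) ∈ K) := fun a => Iff.rfl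
  have memL : ∀ x : I, x ∈ L ↔ (((0:A), x) ∈ K) := fun x => Iff.rfl
  constructor
  · rintro ⟨z, x⟩ hpK hp ⟨b, y⟩ hqK
    rw [Submodule.mem_prod] at hp
    obtain ⟨hz, hx⟩ := hp
    rw [memZ] at hz
    rw [memL] at hx
    have hz1 := (hK _ hz (b, 0)).1
    have hz2 := (hK _ hz (0, y)).1
    have hz1' := (hK _ hz (b, 0)).2
    have hz2' := (hK _ hz (0, y)).2
    have hx1 := (hK _ hx (b, y)).1
    have hx1' := (hK _ hx (b, y)).2
    simp only [dorrohMul, map_zero, LinearMap.zero_apply, add_zero, zero_add] at hz1 hz2 hz1' hz2' hx1 hx1' ⊢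
    constructor
    · rw [Submodule.mem_prod]
      constructor
      · simpa [memZ] using hz1
      · rw [memL]
        have := K.add_mem hz2 hx1
        simpa [Prod.ext_iff, add_assoc] using this
    · rw [Submodule.mem_prod]
      constructor
      · simpa [memZ] using hz1'
      · rw [memL]
        have := K.add_mem hx1' hz2'
        have heq : ((0:A), l b x + mI y x) + ((0:A), r y z) = ((0:A), l b x + r y z + mI y x) := by
          ext
          · simp
          · simp; abel
        rwa [heq] at this
  · set N := Submodule.comap K.subtype (Submodule.prod Z L) with hNdef
    set S := Submodule.map Z.mkQ (Submodule.map (LinearMap.fst k A I) K) with hSdef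
    set g : ↥K →ₗ[k] A ⧸ Z := Z.mkQ ∘ₗ (LinearMap.fst k A I) ∘ₗ K.subtype with hgdef
    have hg : ∀ p : ↥K, g p ∈ S := fun p => ⟨(p : A × I).1, ⟨p, p.2, rfl⟩, rfl⟩
    set f : ↥K →ₗ[k] ↥S := g.codRestrict S hg with hfdef
    have hker : LinearMap.ker f = N := by
      ext p
      have h1 : p ∈ LinearMap.ker f ↔ (p : A × I).1 ∈ Z := by
        rw [LinearMap.mem_ker]
        constructor
        · intro h
          have : g p = 0 := congrArg Subtype.val h
          simpa [hgdef, Submodule.mkQ_apply, Submodule.Quotient.mk_eq_zero] using this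
        · intro h
          apply Subtype.ext
          simpa [hfdef, hgdef, LinearMap.codRestrict, Submodule.mkQ_apply,
            Submodule.Quotient.mk_eq_zero] using h
      rw [h1, hNdef]
      simp only [Submodule.mem_comap, Submodule.mem_prod]
      constructor
      · intro h
        refine ⟨h, ?_⟩
        show ((0:A), (p : A × I).2) ∈ K
        have hsub : ((0:A), (p : A × I).2) = (p : A × I) - ((p : A × I).1, (0:I)) := by
          ext <;> simp
        rw [hsub]
        exact K.sub_mem p.2 ((memZ _).mp h)
      · exact fun h => h.1
    have hNle : N ≤ LinearMap.ker f := le_of_eq hker.symm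
    set lift := N.liftQ f hNle with hliftdef
    have hinj : Function.Injective lift := by
      rw [← LinearMap.ker_eq_bot]
      exact Submodule.ker_liftQ_eq_bot N f hNle (le_of_eq hker)
    have hsurj : Function.Surjective lift := by
      rintro ⟨s, hs⟩
      obtain ⟨b, ⟨p, hpK, rfl⟩, rfl⟩ := hs
      exact ⟨Submodule.Quotient.mk ⟨p, hpK⟩, rfl⟩
    refine ⟨LinearEquiv.ofBijective lift ⟨hinj, hsurj⟩, fun p => rfl, fun p q h => rfl⟩
end

section
/- Let $(A,I)$ be a Dorroh pair of algebras and $K$ a two-sided ideal of $A\ltimes_d I$. Set $B=\pi_A(K)$, $Z=\{a\in A : (a,0)\in K\}$, $J=\pi_I(K)$, $L=\{x\in I : (0,x)\in K\}$. Then the map sending $x+L$ to $a+Z$ whenever $(a,-x)\in K$ is a well-defined algebra isomorphism $J/L\to B/Z$. -/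
theorem stmt5 {k : Type*} [Field k] {A I : Type*} [AddCommGroup A] [Module k A]
    [AddCommGroup I] [Module k I]
    (mA : A →ₗ[k] A →ₗ[k] A) (mI : I →ₗ[k] I →ₗ[k] I)
    (l : A →ₗ[k] I →ₗ[k] I) (r : I →ₗ[k] A →ₗ[k] I)
    (hA : ∀ a b c : A, mA (mA a b) c = mA a (mA b c))
    (hI : ∀ x y z : I, mI (mI x y) z = mI x (mI y z))
    (hll : ∀ (a b : A) (x : I), l (mA a b) x = l a (l b x))
    (hrr : ∀ (x : I) (a b : A), r (r x a) b = r x (mA a b))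
    (hlr : ∀ (a : A) (x : I) (b : A), r (l a x) b = l a (r x b))
    (h1 : ∀ (a : A) (x y : I), l a (mI x y) = mI (l a x) y)
    (h2 : ∀ (x : I) (a : A) (y : I), mI (r x a) y = mI x (l a y))
    (h3 : ∀ (x y : I) (a : A), r (mI x y) a = mI x (r y a))
    -- `K` is a two-sided ideal of `A ⋉ I`
    (K : Submodule k (A × I))
    (hK : ∀ p ∈ K, ∀ q : A × I, dorrohMul mA mI l r p q ∈ K ∧ dorrohMul mA mI l r q p ∈ K) :
    -- with `B = π_A(K)`, `Z = {a | (a,0) ∈ K}`, `J = π_I(K)`, `L = {x | (0,x) ∈ K}`,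
    -- the map `x + L ↦ a + Z` whenever `(a,-x) ∈ K` is a well-defined algebra
    -- isomorphism `J/L → B/Z`
    ∃ e : ↥(Submodule.map (Submodule.comap (LinearMap.inr k A I) K).mkQ
          (Submodule.map (LinearMap.snd k A I) K)) ≃ₗ[k]
        ↥(Submodule.map (Submodule.comap (LinearMap.inl k A I) K).mkQ
          (Submodule.map (LinearMap.fst k A I) K)),
      -- `e` sends `x + L` to `a + Z` whenever `(a,-x) ∈ K`
      (∀ (a : A) (x : I), (a, -x) ∈ K →
        ∀ h : (Submodule.comap (LinearMap.inr k A I) K).mkQ x ∈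
            Submodule.map (Submodule.comap (LinearMap.inr k A I) K).mkQ
              (Submodule.map (LinearMap.snd k A I) K),
          ((e ⟨(Submodule.comap (LinearMap.inr k A I) K).mkQ x, h⟩ : _)
              : A ⧸ Submodule.comap (LinearMap.inl k A I) K)
            = (Submodule.comap (LinearMap.inl k A I) K).mkQ a) ∧
      -- `e` is multiplicative
      (∀ (a b : A) (x y : I), (a, -x) ∈ K → (b, -y) ∈ K →
        ∀ h : (Submodule.comap (LinearMap.inr k A I) K).mkQ (mI x y) ∈
            Submodule.map (Submodule.comap (LinearMap.inr k A I) K).mkQ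
              (Submodule.map (LinearMap.snd k A I) K),
          ((e ⟨(Submodule.comap (LinearMap.inr k A I) K).mkQ (mI x y), h⟩ : _)
              : A ⧸ Submodule.comap (LinearMap.inl k A I) K)
            = (Submodule.comap (LinearMap.inl k A I) K).mkQ (mA a b)) := by
  classical
  set Z := Submodule.comap (LinearMap.inl k A I) K with hZdef
  set L := Submodule.comap (LinearMap.inr k A I) K with hLdef
  let u : K →ₗ[k] A ⧸ Z := Z.mkQ ∘ₗ (LinearMap.fst k A I) ∘ₗ K.subtype
  let v : K →ₗ[k] I ⧸ L := -(L.mkQ ∘ₗ (LinearMap.snd k A I) ∘ₗ K.subtype)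
  have hv : ∀ p : K, v p = L.mkQ (-(p : A × I).2) := by
    intro p; simp [v]
  have hu : ∀ p : K, u p = Z.mkQ (p : A × I).1 := by
    intro p; simp [u]
  have hmemZ : ∀ a : A, a ∈ Z ↔ (a, (0 : I)) ∈ K := by
    intro a; rw [hZdef]; rfl
  have hmemL : ∀ x : I, x ∈ L ↔ ((0 : A), x) ∈ K := by
    intro x; rw [hLdef]; rfl
  have hker : LinearMap.ker v = LinearMap.ker u := by
    ext p
    simp only [LinearMap.mem_ker, hv, hu, Submodule.mkQ_apply,
      Submodule.Quotient.mk_eq_zero, hmemZ, hmemL]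
    constructor
    · intro h
      have h2 : ((p : A × I).1, (0 : I)) = (p : A × I) + ((0 : A), -(p : A × I).2) := by
        ext <;> simp
      rw [h2]; exact K.add_mem p.2 h
    · intro h
      have := K.sub_mem h p.2
      have h2 : ((0 : A), -(p : A × I).2) = ((p : A × I).1, 0) - (p : A × I) := by
        ext <;> simp
      rw [h2]; exact this
  have hrv : LinearMap.range v =
      Submodule.map L.mkQ (Submodule.map (LinearMap.snd k A I) K) := by
    ext y
    constructor
    · rintro ⟨p, rfl⟩
      exact ⟨-(p : A × I).2, ⟨-(p : A × I), K.neg_mem p.2, rfl⟩, (hv p).symm⟩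
    · rintro ⟨x, ⟨q, hq, rfl⟩, rfl⟩
      exact ⟨⟨-q, K.neg_mem hq⟩, by simp [hv]⟩
  have hru : LinearMap.range u =
      Submodule.map Z.mkQ (Submodule.map (LinearMap.fst k A I) K) := by
    ext y
    constructor
    · rintro ⟨p, rfl⟩
      exact ⟨(p : A × I).1, ⟨(p : A × I), p.2, rfl⟩, (hu p).symm⟩
    · rintro ⟨a, ⟨q, hq, rfl⟩, rfl⟩
      exact ⟨⟨q, hq⟩, by simp [hu]⟩
  refine ⟨(LinearEquiv.ofEq _ _ hrv.symm).trans <|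
    v.quotKerEquivRange.symm.trans <|
    (Submodule.quotEquivOfEq _ _ hker).trans <|
    u.quotKerEquivRange.trans (LinearEquiv.ofEq _ _ hru), ?_, ?_⟩
  · intro a x hax h
    set p : K := ⟨(a, -x), hax⟩ with hp
    have hvp : v p = L.mkQ x := by simp [hv, hp]
    have e1 : (LinearEquiv.ofEq _ _ hrv.symm) ⟨L.mkQ x, h⟩
        = ⟨v p, LinearMap.mem_range_self v p⟩ :=
      Subtype.ext (by simp [hvp])
    simp only [LinearEquiv.trans_apply]
    rw [e1, LinearMap.quotKerEquivRange_symm_apply_image]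
    simp only [Submodule.mkQ_apply, Submodule.quotEquivOfEq_mk,
      LinearEquiv.coe_ofEq_apply, LinearMap.quotKerEquivRange_apply_mk, hu, hp]
  · intro a b x y hax hby h
    have t1 := (hK _ hax (b, -y)).1
    have t2 := (hK _ hby (0, x)).2
    have t3 := (hK _ hax (0, y)).1
    have heq : dorrohMul mA mI l r (a, -x) (b, -y) + dorrohMul mA mI l r (0, x) (b, -y)
        + dorrohMul mA mI l r (a, -x) (0, y) = (mA a b, -(mI x y)) := by
      simp only [dorrohMul, Prod.mk_add_mk, Prod.mk.injEq, map_neg, map_zero,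
        LinearMap.neg_apply, LinearMap.zero_apply, neg_neg]
      constructor
      · abel
      · abel
    have hmem : (mA a b, -(mI x y)) ∈ K := heq ▸ K.add_mem (K.add_mem t1 t2) t3
    set p : K := ⟨(mA a b, -(mI x y)), hmem⟩ with hp
    have hvp : v p = L.mkQ (mI x y) := by simp [hv, hp]
    have e1 : (LinearEquiv.ofEq _ _ hrv.symm) ⟨L.mkQ (mI x y), h⟩
        = ⟨v p, LinearMap.mem_range_self v p⟩ :=
      Subtype.ext (by simp [hvp])
    simp only [LinearEquiv.trans_apply]
    rw [e1, LinearMap.quotKerEquivRange_symm_apply_image]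
    simp only [Submodule.mkQ_apply, Submodule.quotEquivOfEq_mk,
      LinearEquiv.coe_ofEq_apply, LinearMap.quotKerEquivRange_apply_mk, hu, hp]
end

section
/- Let $(H,I)$ be a Dorroh pair of coalgebras over a field $k$. Then the comultiplication $\Delta(h,x)=\sum(h_1,0)\otimes(h_2,0)+\sum(x_{(-1)},0)\otimes(0,x_{(0)})+\sum(0,x_{(0)})\otimes(x_{(1)},0)+\sum(0,x_1)\otimes(0,x_2)$ on $H\oplus I$ is coassociative. -/
open TensorProduct
section aux
variable {k : Type*} [Field k]
variable {X Y Z X' Y' Z' M M' N : Type*}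
  [AddCommGroup X] [Module k X] [AddCommGroup Y] [Module k Y] [AddCommGroup Z] [Module k Z]
  [AddCommGroup X'] [Module k X'] [AddCommGroup Y'] [Module k Y'] [AddCommGroup Z'] [Module k Z']
  [AddCommGroup M] [Module k M] [AddCommGroup M'] [Module k M'] [AddCommGroup N] [Module k N]

lemma key (a : X →ₗ[k] X') (b : Y →ₗ[k] Y') (c : Z →ₗ[k] Z')
    {F : M →ₗ[k] X ⊗[k] Y} {G : N →ₗ[k] M ⊗[k] Z}
    {F' : M' →ₗ[k] Y ⊗[k] Z} {G' : N →ₗ[k] X ⊗[k] M'}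
    (hyp : (TensorProduct.assoc k X Y Z).toLinearMap ∘ₗ TensorProduct.map F LinearMap.id ∘ₗ G
      = TensorProduct.map LinearMap.id F' ∘ₗ G') (n : N) :
    (TensorProduct.assoc k X' Y' Z') (TensorProduct.map (TensorProduct.map a b ∘ₗ F) c (G n))
      = TensorProduct.map a (TensorProduct.map b c ∘ₗ F') (G' n) := by
  have h1 : TensorProduct.map (TensorProduct.map a b ∘ₗ F) c
      = TensorProduct.map (TensorProduct.map a b) c ∘ₗ TensorProduct.map F LinearMap.id := by
    rw [← TensorProduct.map_comp, LinearMap.comp_id]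
  have h2 := DFunLike.congr_fun hyp n
  simp only [LinearMap.comp_apply, LinearEquiv.coe_coe] at h2
  rw [h1, LinearMap.comp_apply, ← TensorProduct.map_map_assoc, h2,
    ← LinearMap.comp_apply, ← TensorProduct.map_comp, LinearMap.comp_id]

lemma mapmap (f : X →ₗ[k] X') (g : Y →ₗ[k] Y') (f' : M →ₗ[k] X) (g' : M' →ₗ[k] Y)
    (t : M ⊗[k] M') :
    TensorProduct.map f g (TensorProduct.map f' g' t)
      = TensorProduct.map (f ∘ₗ f') (g ∘ₗ g') t := by
  rw [TensorProduct.map_comp, LinearMap.comp_apply]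
end aux

/-- Coassociativity of a (not necessarily counital) comultiplication. -/
def Coassoc {k : Type*} [Field k] {V : Type*} [AddCommGroup V] [Module k V]
    (d : V →ₗ[k] V ⊗[k] V) : Prop :=
  (TensorProduct.assoc k V V V).toLinearMap ∘ₗ TensorProduct.map d LinearMap.id ∘ₗ d
    = TensorProduct.map LinearMap.id d ∘ₗ d

/-- The Dorroh comultiplication on `H × I` for a Dorroh pair of coalgebras `(H, I)`. -/
noncomputable def dorrohComul {k : Type*} [Field k] {H I : Type*} [AddCommGroup H] [Module k H]
    [AddCommGroup I] [Module k I]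
    (dH : H →ₗ[k] H ⊗[k] H) (dI : I →ₗ[k] I ⊗[k] I)
    (ρl : I →ₗ[k] H ⊗[k] I) (ρr : I →ₗ[k] I ⊗[k] H) :
    (H × I) →ₗ[k] (H × I) ⊗[k] (H × I) :=
  TensorProduct.map (LinearMap.inl k H I) (LinearMap.inl k H I) ∘ₗ dH ∘ₗ LinearMap.fst k H I
  + TensorProduct.map (LinearMap.inl k H I) (LinearMap.inr k H I) ∘ₗ ρl ∘ₗ LinearMap.snd k H I
  + TensorProduct.map (LinearMap.inr k H I) (LinearMap.inl k H I) ∘ₗ ρr ∘ₗ LinearMap.snd k H I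
  + TensorProduct.map (LinearMap.inr k H I) (LinearMap.inr k H I) ∘ₗ dI ∘ₗ LinearMap.snd k H I

theorem stmt10 {k : Type*} [Field k] {H I : Type*} [AddCommGroup H] [Module k H]
    [AddCommGroup I] [Module k I]
    (dH : H →ₗ[k] H ⊗[k] H) (dI : I →ₗ[k] I ⊗[k] I)
    (ρl : I →ₗ[k] H ⊗[k] I) (ρr : I →ₗ[k] I ⊗[k] H)
    -- `H` and `I` are coalgebras
    (hH : Coassoc dH) (hI : Coassoc dI)
    -- `I` is an `H`-bicomodule
    (hl : (TensorProduct.assoc k H H I).toLinearMap ∘ₗ TensorProduct.map dH LinearMap.id ∘ₗ ρl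
      = TensorProduct.map LinearMap.id ρl ∘ₗ ρl)
    (hr : TensorProduct.map LinearMap.id dH ∘ₗ ρr
      = (TensorProduct.assoc k I H H).toLinearMap ∘ₗ TensorProduct.map ρr LinearMap.id ∘ₗ ρr)
    (hbi : TensorProduct.map LinearMap.id ρr ∘ₗ ρl
      = (TensorProduct.assoc k H I H).toLinearMap ∘ₗ TensorProduct.map ρl LinearMap.id ∘ₗ ρr)
    -- the coactions are compatible with the comultiplication of `I`
    (c1 : TensorProduct.map LinearMap.id ρr ∘ₗ dI
      = (TensorProduct.assoc k I I H).toLinearMap ∘ₗ TensorProduct.map dI LinearMap.id ∘ₗ ρr)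
    (c2 : (TensorProduct.assoc k H I I).toLinearMap ∘ₗ TensorProduct.map ρl LinearMap.id ∘ₗ dI
      = TensorProduct.map LinearMap.id dI ∘ₗ ρl)
    (c3 : (TensorProduct.assoc k I H I).toLinearMap ∘ₗ TensorProduct.map ρr LinearMap.id ∘ₗ dI
      = TensorProduct.map LinearMap.id ρl ∘ₗ dI) :
    -- then the Dorroh comultiplication on `H ⊕ I` is coassociative
    Coassoc (dorrohComul dH dI ρl ρr) := by
  set inlH := LinearMap.inl k H I with hinl
  set inrI := LinearMap.inr k H I with hinr
  have DinlC : dorrohComul dH dI ρl ρr ∘ₗ inlH = TensorProduct.map inlH inlH ∘ₗ dH := by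
    apply LinearMap.ext; intro y
    simp [dorrohComul, hinl, hinr]
  have DinrC : dorrohComul dH dI ρl ρr ∘ₗ inrI =
      TensorProduct.map inlH inrI ∘ₗ ρl + TensorProduct.map inrI inlH ∘ₗ ρr
        + TensorProduct.map inrI inrI ∘ₗ dI := by
    apply LinearMap.ext; intro z
    simp [dorrohComul, hinl, hinr]
  unfold Coassoc
  apply LinearMap.ext
  rintro ⟨h, x⟩
  have hD : dorrohComul dH dI ρl ρr (h, x)
      = TensorProduct.map inlH inlH (dH h)
      + TensorProduct.map inlH inrI (ρl x)
      + TensorProduct.map inrI inlH (ρr x)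
      + TensorProduct.map inrI inrI (dI x) := by
    simp [dorrohComul, hinl, hinr]
  simp only [LinearMap.comp_apply, LinearEquiv.coe_coe, hD, map_add, mapmap,
    LinearMap.id_comp, DinlC, DinrC, TensorProduct.map_add_left, TensorProduct.map_add_right,
    LinearMap.add_apply]
  rw [key inlH inlH inlH hH, key inlH inlH inrI hl, key inlH inrI inlH hbi.symm,
    key inrI inlH inlH hr.symm, key inrI inrI inlH c1.symm, key inlH inrI inrI c2,
    key inrI inlH inrI c3, key inrI inrI inrI hI]
  abel
end

section
/- Let $P$ be a coalgebra without counit over a field $k$, and equip $k\ltimes_d P = k\oplus P$ with the comultiplication making it the Dorroh extension of the trivial coalgebra $k$ by $P$ (where $P$ has trivial $k$-comodule structures $\rho_l(p)=1\otimes p$, $\rho_r(p)=p\otimes 1$). Let $R$ be a coideal of $P$ and $x\in P\setminus R$ such that $\Delta(x)-x\otimes x\in R\otimes R$, and for all $p\in R$: $\Delta(p)-x\otimes p\in R\otimes(kx+R)$ and $\Delta(p)-p\otimes x\in(kx+R)\otimes R$. Then $T=k(1,x)+(\{0\}\times R)$ is a subcoalgebra of $k\ltimes_d P$. -/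
/-! Expanding the comultiplication of `k ⋉ P`, `Δ(1,x)` equals `(1,x) ⊗ (1,x)` plus the image of
`Δx - x ⊗ x`, and `Δ(0,r)` equals `(1,x) ⊗ (0,r) + (0,r) ⊗ (1,x)` plus the image of
`Δr - x ⊗ r - r ⊗ x`, both images taken in `(0,P) ⊗ (0,P)`. So it suffices that both differences
lie in `R ⊗ R`. The second lies in `(R ⊗ S) ∩ (S ⊗ R)` with `S = kx + R`, and over a field this
intersection is `R ⊗ R` whenever `R ≤ S`. -/

open TensorProduct

/-- The comultiplication of the counitization `k ⋉ P` of a non-counital coalgebra `P`: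
`Δ(α,p) = α(1,0)⊗(1,0) + (1,0)⊗(0,p) + (0,p)⊗(1,0) + ∑(0,p₁)⊗(0,p₂)`. -/
noncomputable def counitComul {k : Type*} [Field k] {P : Type*} [AddCommGroup P] [Module k P]
    (dP : P →ₗ[k] P ⊗[k] P) : (k × P) →ₗ[k] (k × P) ⊗[k] (k × P) :=
  LinearMap.toSpanSingleton k ((k × P) ⊗[k] (k × P))
      (((1 : k), (0 : P)) ⊗ₜ[k] ((1 : k), (0 : P))) ∘ₗ LinearMap.fst k k P
  + TensorProduct.mk k (k × P) (k × P) ((1 : k), (0 : P)) ∘ₗ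
      LinearMap.inr k k P ∘ₗ LinearMap.snd k k P
  + (TensorProduct.mk k (k × P) (k × P)).flip ((1 : k), (0 : P)) ∘ₗ
      LinearMap.inr k k P ∘ₗ LinearMap.snd k k P
  + TensorProduct.map (LinearMap.inr k k P) (LinearMap.inr k k P) ∘ₗ dP ∘ₗ LinearMap.snd k k P

namespace TensorProduct

variable {k : Type*} [Field k] {P Q P' Q' : Type*} [AddCommGroup P] [Module k P]
  [AddCommGroup Q] [Module k Q] [AddCommGroup P'] [Module k P'] [AddCommGroup Q'] [Module k Q']

lemma tmul_mem_range_mapIncl {p : Submodule k P} {q : Submodule k Q} {a : P} {b : Q}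
    (ha : a ∈ p) (hb : b ∈ q) : a ⊗ₜ[k] b ∈ LinearMap.range (mapIncl p q) := by
  rw [range_mapIncl]
  exact Submodule.apply_mem_map₂ _ ha hb

lemma map_mem_range_mapIncl {f : P →ₗ[k] P'} {g : Q →ₗ[k] Q'} {p : Submodule k P}
    {p' : Submodule k P'} {q : Submodule k Q} {q' : Submodule k Q'} (hp : p.map f ≤ p')
    (hq : q.map g ≤ q') {z : P ⊗[k] Q} (hz : z ∈ LinearMap.range (mapIncl p q)) :
    map f g z ∈ LinearMap.range (mapIncl p' q') := by
  obtain ⟨u, rfl⟩ := hz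
  rw [map_map]
  exact range_map_mono (by simpa [LinearMap.range_comp]) (by simpa [LinearMap.range_comp]) ⟨u, rfl⟩

/-- For a retraction `g` of `P` onto `R` with `g(S) ⊆ R`, the map `id ⊗ g` fixes `S ⊗ R` pointwise
and sends `R ⊗ S` into `R ⊗ R`. -/
lemma range_mapIncl_inf_le {R S : Submodule k P} (hRS : R ≤ S) :
    LinearMap.range (mapIncl R S) ⊓ LinearMap.range (mapIncl S R) ≤
      LinearMap.range (mapIncl R R) := by
  obtain ⟨π, hπ⟩ := (Submodule.inclusion hRS).exists_leftInverse_of_injective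
    (Submodule.ker_inclusion R S hRS)
  obtain ⟨g, hg⟩ := LinearMap.exists_extend (R.subtype ∘ₗ π)
  have hgR : g ∘ₗ R.subtype = R.subtype := by
    conv_lhs => rw [← Submodule.subtype_comp_inclusion R S hRS, ← LinearMap.comp_assoc, hg,
      LinearMap.comp_assoc, hπ, LinearMap.comp_id]
  rintro w ⟨⟨u, rfl⟩, v, hv⟩
  have hfix : map LinearMap.id g (mapIncl S R v) = mapIncl S R v := by
    rw [map_map, LinearMap.id_comp, hgR]
  refine ⟨map LinearMap.id π u, ?_⟩
  rw [← hv, ← hfix, hv, map_map, map_map, LinearMap.id_comp, LinearMap.comp_id, hg]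

end TensorProduct

section Counitization

variable {k : Type*} [Field k] {P : Type*} [AddCommGroup P] [Module k P]

lemma counitComul_apply (dP : P →ₗ[k] P ⊗[k] P) (a : k) (p : P) :
    counitComul dP (a, p) = a • (((1 : k), (0 : P)) ⊗ₜ[k] ((1 : k), (0 : P)))
      + ((1 : k), (0 : P)) ⊗ₜ[k] ((0 : k), p) + ((0 : k), p) ⊗ₜ[k] ((1 : k), (0 : P))
      + map (LinearMap.inr k k P) (LinearMap.inr k k P) (dP p) := by
  simp [counitComul]

lemma counitComul_one_mk (dP : P →ₗ[k] P ⊗[k] P) (x : P) :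
    counitComul dP ((1 : k), x) = ((1 : k), x) ⊗ₜ[k] ((1 : k), x)
      + map (LinearMap.inr k k P) (LinearMap.inr k k P) (dP x - x ⊗ₜ[k] x) := by
  have hsplit : ((1 : k), x) = ((1 : k), (0 : P)) + ((0 : k), x) := by simp
  rw [counitComul_apply, map_sub, map_tmul, hsplit]
  simp only [add_tmul, tmul_add, one_smul, LinearMap.inr_apply]
  abel

lemma counitComul_inr (dP : P →ₗ[k] P ⊗[k] P) (x r : P) :
    counitComul dP (LinearMap.inr k k P r) = ((1 : k), x) ⊗ₜ[k] LinearMap.inr k k P r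
      + LinearMap.inr k k P r ⊗ₜ[k] ((1 : k), x)
      + map (LinearMap.inr k k P) (LinearMap.inr k k P) (dP r - x ⊗ₜ[k] r - r ⊗ₜ[k] x) := by
  have hsplit : ((1 : k), x) = ((1 : k), (0 : P)) + ((0 : k), x) := by simp
  rw [LinearMap.inr_apply, counitComul_apply, map_sub, map_sub, map_tmul, map_tmul, hsplit]
  simp only [add_tmul, tmul_add, zero_smul, LinearMap.inr_apply]
  abel

end Counitization

theorem stmt12_general {k : Type*} [Field k] {P : Type*} [AddCommGroup P] [Module k P]
    (dP : P →ₗ[k] P ⊗[k] P)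
    (R : Submodule k P)
    (x : P)
    -- `Δ(x) - x ⊗ x ∈ R ⊗ R`
    (h1 : dP x - x ⊗ₜ[k] x ∈ LinearMap.range (TensorProduct.map R.subtype R.subtype))
    -- `Δ(p) - x ⊗ p ∈ R ⊗ (kx + R)` for all `p ∈ R`
    (h2 : ∀ p ∈ R, dP p - x ⊗ₜ[k] p ∈
      LinearMap.range (TensorProduct.map R.subtype (Submodule.span k {x} ⊔ R).subtype))
    -- `Δ(p) - p ⊗ x ∈ (kx + R) ⊗ R` for all `p ∈ R`
    (h3 : ∀ p ∈ R, dP p - p ⊗ₜ[k] x ∈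
      LinearMap.range (TensorProduct.map (Submodule.span k {x} ⊔ R).subtype R.subtype)) :
    -- then `T = k(1,x) + ({0} × R)` is a subcoalgebra of `k ⋉ P`
    ∀ t ∈ Submodule.span k {((1 : k), x)} ⊔ Submodule.map (LinearMap.inr k k P) R,
      counitComul dP t ∈ LinearMap.range (TensorProduct.map
        (Submodule.span k {((1 : k), x)} ⊔ Submodule.map (LinearMap.inr k k P) R).subtype
        (Submodule.span k {((1 : k), x)} ⊔ Submodule.map (LinearMap.inr k k P) R).subtype) := by
  intro t ht
  set T := Submodule.span k {((1 : k), x)} ⊔ Submodule.map (LinearMap.inr k k P) R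
  have hxT : ((1 : k), x) ∈ T := Submodule.mem_sup_left (Submodule.mem_span_singleton_self _)
  have hRT : R.map (LinearMap.inr k k P) ≤ T := le_sup_right
  obtain ⟨_, hy, _, ⟨r, hr, rfl⟩, rfl⟩ := Submodule.mem_sup.mp ht
  obtain ⟨a, rfl⟩ := Submodule.mem_span_singleton.mp hy
  have hrT : LinearMap.inr k k P r ∈ T := hRT ⟨r, hr, rfl⟩
  have hxS : x ∈ Submodule.span k {x} ⊔ R :=
    Submodule.mem_sup_left (Submodule.mem_span_singleton_self _)
  have hcross : dP r - x ⊗ₜ[k] r - r ⊗ₜ[k] x ∈ LinearMap.range (mapIncl R R) :=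
    range_mapIncl_inf_le le_sup_right
      ⟨sub_mem (h2 r hr) (tmul_mem_range_mapIncl hr hxS),
        sub_right_comm (dP r) _ _ ▸ sub_mem (h3 r hr) (tmul_mem_range_mapIncl hxS hr)⟩
  rw [map_add, map_smul, counitComul_one_mk, counitComul_inr dP x]
  exact add_mem
    (Submodule.smul_mem _ a <| add_mem (tmul_mem_range_mapIncl hxT hxT)
      (map_mem_range_mapIncl hRT hRT h1))
    (add_mem (add_mem (tmul_mem_range_mapIncl hxT hrT) (tmul_mem_range_mapIncl hrT hxT))
      (map_mem_range_mapIncl hRT hRT hcross))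

theorem stmt12 {k : Type*} [Field k] {P : Type*} [AddCommGroup P] [Module k P]
    (dP : P →ₗ[k] P ⊗[k] P) (hP : Coassoc dP)
    -- `R` is a coideal of `P`
    (R : Submodule k P)
    (hR : ∀ p ∈ R, dP p ∈
      LinearMap.range (TensorProduct.map R.subtype (LinearMap.id (R := k) (M := P)))
        ⊔ LinearMap.range (TensorProduct.map (LinearMap.id (R := k) (M := P)) R.subtype))
    -- `x ∈ P \ R`
    (x : P) (hx : x ∉ R)
    -- `Δ(x) - x ⊗ x ∈ R ⊗ R`
    (h1 : dP x - x ⊗ₜ[k] x ∈ LinearMap.range (TensorProduct.map R.subtype R.subtype))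
    -- `Δ(p) - x ⊗ p ∈ R ⊗ (kx + R)` for all `p ∈ R`
    (h2 : ∀ p ∈ R, dP p - x ⊗ₜ[k] p ∈
      LinearMap.range (TensorProduct.map R.subtype (Submodule.span k {x} ⊔ R).subtype))
    -- `Δ(p) - p ⊗ x ∈ (kx + R) ⊗ R` for all `p ∈ R`
    (h3 : ∀ p ∈ R, dP p - p ⊗ₜ[k] x ∈
      LinearMap.range (TensorProduct.map (Submodule.span k {x} ⊔ R).subtype R.subtype)) :
    -- then `T = k(1,x) + ({0} × R)` is a subcoalgebra of `k ⋉ P`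
    ∀ t ∈ Submodule.span k {((1 : k), x)} ⊔ Submodule.map (LinearMap.inr k k P) R,
      counitComul dP t ∈ LinearMap.range (TensorProduct.map
        (Submodule.span k {((1 : k), x)} ⊔ Submodule.map (LinearMap.inr k k P) R).subtype
        (Submodule.span k {((1 : k), x)} ⊔ Submodule.map (LinearMap.inr k k P) R).subtype) :=
  stmt12_general dP R x h1 h2 h3
end

section
/- Let $(C,P)$ be a Dorroh pair of coalgebras with $C$ counital, and suppose $T$ is a subcoalgebra of $C\ltimes_d P$. Define $E=\{c\in C:(c,0)\in T\}$, $D=\pi_C(T)$, $R=\{p\in P:(0,p)\in T\}$, $Q=\pi_P(T)$. Then $(E,R)=\{(c,p):c\in E,p\in R\}$ is a coideal of the coalgebra $T$, and $T/(E,R)\cong D/E$ as coalgebras, the isomorphism induced by $(c,p)\mapsto c+E$. -/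
/-!
Let `θ = quotFst T : T → C ⧸ E`, `(c, p) ↦ c + E`. Since `T ∩ (C × 0) = E × 0`, its kernel is
`(E, R)` and its image is `D ⧸ E`. The `C ⊗ C`-component of `Δ (c, p)` is `Δ_C c`, so `θ`
intertwines `Δ` and the comultiplication of `C ⧸ E`, once the latter exists. It does: for `c ∈ E`,
`Δ (c, 0) = Δ_C c` lies in `T ⊗ T` with vanishing `C ⊗ P`-component, and on `T` the map `θ`
factors through the second projection, so `θ ⊗ θ` kills it. Finally, over a field
`ker (θ ⊗ θ) = ker θ ⊗ T + T ⊗ ker θ`, so the kernel of a comultiplicative map is a coideal.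
-/
open TensorProduct

section VectorSpace

open LinearMap

variable {k : Type*} [Field k] {U V W X Y : Type*} [AddCommGroup U] [Module k U]
  [AddCommGroup V] [Module k V] [AddCommGroup W] [Module k W] [AddCommGroup X] [Module k X]
  [AddCommGroup Y] [Module k Y]

theorem LinearMap.exists_comp_eq_of_ker_le (f : U →ₗ[k] V) (g : U →ₗ[k] W) (h : ker f ≤ ker g) :
    ∃ g' : V →ₗ[k] W, g' ∘ₗ f = g := by
  obtain ⟨r, hr⟩ := f.rangeRestrict.exists_rightInverse_of_surjective f.range_rangeRestrict
  obtain ⟨g', hg'⟩ := LinearMap.exists_extend (g ∘ₗ r)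
  refine ⟨g', LinearMap.ext fun u => ?_⟩
  have hu : r (f.rangeRestrict u) - u ∈ ker g := h <| by
    simpa [sub_eq_zero] using congr(Subtype.val ($hr (f.rangeRestrict u)))
  calc g' (f u) = g' ((range f).subtype (f.rangeRestrict u)) := rfl
    _ = g (r (f.rangeRestrict u)) := congr($hg' _)
    _ = g u := by simpa [sub_eq_zero] using hu

theorem TensorProduct.map_eq_zero_of_ker_le {f : U →ₗ[k] V} {s : W →ₗ[k] X} {θ : W →ₗ[k] Y}
    (h : ker s ≤ ker θ) {w : U ⊗[k] W} (hw : map f s w = 0) : map f θ w = 0 := by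
  obtain ⟨g, rfl⟩ := exists_comp_eq_of_ker_le s θ h
  rw [← lTensor_comp_map, comp_apply, hw, map_zero]

theorem TensorProduct.ker_map_self (θ : V →ₗ[k] W) :
    ker (map θ θ) = range (rTensor V (ker θ).subtype) ⊔ range (lTensor V (ker θ).subtype) := by
  have hexact : Function.Exact (ker θ).subtype θ.rangeRestrict := by
    rw [LinearMap.exact_iff, ker_rangeRestrict, Submodule.range_subtype]
  have hinj : ker (map (range θ).subtype (range θ).subtype) = ⊥ :=
    ker_eq_bot.2 <| map_injective_of_flat_flat _ _ (range θ).injective_subtype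
      (range θ).injective_subtype
  have hfactor : map θ θ
      = map (range θ).subtype (range θ).subtype ∘ₗ map θ.rangeRestrict θ.rangeRestrict := by
    rw [← map_comp]; rfl
  rw [hfactor, ker_comp_of_ker_eq_bot _ hinj, sup_comm,
    map_ker hexact θ.surjective_rangeRestrict hexact θ.surjective_rangeRestrict]

/-- Without a counit condition: the comultiplications here need not be counital. -/
def IsCoideal (d : V →ₗ[k] V ⊗[k] V) (K : Submodule k V) : Prop :=
  ∀ v ∈ K, d v ∈ range (rTensor V K.subtype) ⊔ range (lTensor V K.subtype)

theorem isCoideal_ker {dV : V →ₗ[k] V ⊗[k] V} {dW : W →ₗ[k] W ⊗[k] W} {θ : V →ₗ[k] W}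
    (hθ : dW ∘ₗ θ = map θ θ ∘ₗ dV) : IsCoideal dV (ker θ) := by
  intro v hv
  rw [← ker_map_self, mem_ker, ← comp_apply (map θ θ), ← hθ, comp_apply, mem_ker.1 hv, map_zero]

end VectorSpace

section Dorroh

open LinearMap

variable {k : Type*} [Field k] {H I : Type*} [AddCommGroup H] [Module k H]
  [AddCommGroup I] [Module k I]
  (dH : H →ₗ[k] H ⊗[k] H) (dI : I →ₗ[k] I ⊗[k] I) (ρl : I →ₗ[k] H ⊗[k] I) (ρr : I →ₗ[k] I ⊗[k] H)

theorem dorrohComul_inl (c : H) :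
    dorrohComul dH dI ρl ρr (inl k H I c) = map (inl k H I) (inl k H I) (dH c) := by
  simp [dorrohComul]

theorem map_fst_fst_comp_dorrohComul :
    map (fst k H I) (fst k H I) ∘ₗ dorrohComul dH dI ρl ρr = dH ∘ₗ fst k H I := by
  simp only [dorrohComul, comp_add, ← comp_assoc, ← map_comp, fst_comp_inl, fst_comp_inr,
    map_zero_left, map_zero_right, zero_comp, map_id, id_comp, add_zero]

variable (T : Submodule k (H × I))

def quotFst : T →ₗ[k] H ⧸ T.comap (inl k H I) :=
  (T.comap (inl k H I)).mkQ ∘ₗ fst k H I ∘ₗ T.subtype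

theorem ker_quotFst :
    ker (quotFst T) = ((T.comap (inl k H I)).prod (T.comap (inr k H I))).comap T.subtype := by
  ext ⟨⟨c, p⟩, ht⟩
  simp only [quotFst, mem_ker, comp_apply, Submodule.mkQ_apply, Submodule.Quotient.mk_eq_zero,
    Submodule.mem_comap, Submodule.mem_prod, Submodule.subtype_apply, fst_apply, iff_self_and]
  intro hc
  simpa using T.sub_mem ht hc

theorem range_quotFst :
    range (quotFst T) = (T.map (fst k H I)).map (T.comap (inl k H I)).mkQ := by
  rw [quotFst, range_comp, range_comp, Submodule.range_subtype]

theorem ker_snd_comp_subtype_le_ker_quotFst : ker (snd k H I ∘ₗ T.subtype) ≤ ker (quotFst T) := by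
  rintro ⟨⟨c, p⟩, ht⟩ hp
  obtain rfl : p = 0 := hp
  simpa [quotFst, Submodule.Quotient.mk_eq_zero] using ht

variable {dH dI ρl ρr T}

theorem comap_inl_le_ker_map_mkQ_comp
    (hT : ∀ t ∈ T, dorrohComul dH dI ρl ρr t ∈ range (map T.subtype T.subtype)) :
    T.comap (inl k H I)
      ≤ ker (map (T.comap (inl k H I)).mkQ (T.comap (inl k H I)).mkQ ∘ₗ dH) := by
  intro c hc
  obtain ⟨w, hw⟩ := hT _ hc
  -- `Δ (c, 0)` has no `H ⊗ I`-component, and on `T` the map `quotFst` factors through `snd`.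
  have hfs : map (fst k H I ∘ₗ T.subtype) (snd k H I ∘ₗ T.subtype) w = 0 := by
    rw [map_comp, comp_apply, hw, dorrohComul_inl, ← comp_apply (map _ _), ← map_comp,
      snd_comp_inl, map_zero_right, LinearMap.zero_apply]
  have hquot : map (quotFst T) (quotFst T) w = 0 :=
    calc map (quotFst T) (quotFst T) w
        = rTensor _ (T.comap (inl k H I)).mkQ (map (fst k H I ∘ₗ T.subtype) (quotFst T) w) := by
          rw [← comp_apply, rTensor_comp_map]; rfl
      _ = 0 := by rw [map_eq_zero_of_ker_le (ker_snd_comp_subtype_le_ker_quotFst T) hfs, map_zero]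
  have hc' : dH c = map (fst k H I) (fst k H I) (map T.subtype T.subtype w) := by
    rw [hw, ← comp_apply (map _ _), map_fst_fst_comp_dorrohComul]; rfl
  rw [mem_ker, comp_apply, hc', ← hquot, quotFst]
  simp only [← comp_apply, ← map_comp]

theorem comul_comp_quotFst {dT : T →ₗ[k] T ⊗[k] T}
    (hdT : map T.subtype T.subtype ∘ₗ dT = dorrohComul dH dI ρl ρr ∘ₗ T.subtype)
    {dQ : H ⧸ T.comap (inl k H I) →ₗ[k] (H ⧸ T.comap (inl k H I)) ⊗[k] (H ⧸ T.comap (inl k H I))}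
    (hdQ : dQ ∘ₗ (T.comap (inl k H I)).mkQ
      = map (T.comap (inl k H I)).mkQ (T.comap (inl k H I)).mkQ ∘ₗ dH) :
    dQ ∘ₗ quotFst T = map (quotFst T) (quotFst T) ∘ₗ dT :=
  calc dQ ∘ₗ quotFst T
      = map (T.comap (inl k H I)).mkQ (T.comap (inl k H I)).mkQ ∘ₗ dH ∘ₗ fst k H I
          ∘ₗ T.subtype := by
        rw [quotFst, ← comp_assoc, hdQ, comp_assoc]
    _ = map (T.comap (inl k H I)).mkQ (T.comap (inl k H I)).mkQ ∘ₗ map (fst k H I) (fst k H I)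
          ∘ₗ map T.subtype T.subtype ∘ₗ dT := by
        rw [hdT, ← comp_assoc T.subtype (fst k H I) dH, ← map_fst_fst_comp_dorrohComul dH dI ρl ρr]
        rfl
    _ = map (quotFst T) (quotFst T) ∘ₗ dT := by simp only [quotFst, ← comp_assoc, ← map_comp]

end Dorroh

theorem stmt14_general {k : Type*} [Field k] {C P : Type*} [AddCommGroup C] [Module k C]
    [AddCommGroup P] [Module k P]
    (dC : C →ₗ[k] C ⊗[k] C) (dP : P →ₗ[k] P ⊗[k] P)
    (ρl : P →ₗ[k] C ⊗[k] P) (ρr : P →ₗ[k] P ⊗[k] C)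
    -- `T` is a subcoalgebra of `C ⋉ P`
    (T : Submodule k (C × P))
    (hT : ∀ t ∈ T, dorrohComul dC dP ρl ρr t ∈
      LinearMap.range (TensorProduct.map T.subtype T.subtype)) :
    -- with `E = {c | (c,0) ∈ T}`, `D = π_C(T)`, `R = {p | (0,p) ∈ T}`:
    -- `T` carries a (unique) coalgebra structure `dT` restricting `Δ`,
    ∃ dT : ↥T →ₗ[k] ↥T ⊗[k] ↥T,
      TensorProduct.map T.subtype T.subtype ∘ₗ dT = dorrohComul dC dP ρl ρr ∘ₗ T.subtype ∧
      -- `(E,R)` is a coideal of the coalgebra `T`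
      (∀ t : ↥T, (↑t : C × P) ∈ Submodule.prod (Submodule.comap (LinearMap.inl k C P) T)
          (Submodule.comap (LinearMap.inr k C P) T) →
        dT t ∈
          LinearMap.range (TensorProduct.map
            (Submodule.comap T.subtype (Submodule.prod (Submodule.comap (LinearMap.inl k C P) T)
              (Submodule.comap (LinearMap.inr k C P) T))).subtype
            (LinearMap.id (R := k) (M := ↥T)))
          ⊔ LinearMap.range (TensorProduct.map (LinearMap.id (R := k) (M := ↥T))
            (Submodule.comap T.subtype (Submodule.prod (Submodule.comap (LinearMap.inl k C P) T)
              (Submodule.comap (LinearMap.inr k C P) T))).subtype)) ∧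
      -- `D/E` (inside `C/E`) carries the quotient coalgebra structure `dQ`
      ∃ dQ : (C ⧸ Submodule.comap (LinearMap.inl k C P) T) →ₗ[k]
          (C ⧸ Submodule.comap (LinearMap.inl k C P) T) ⊗[k]
          (C ⧸ Submodule.comap (LinearMap.inl k C P) T),
        dQ ∘ₗ (Submodule.comap (LinearMap.inl k C P) T).mkQ
          = TensorProduct.map (Submodule.comap (LinearMap.inl k C P) T).mkQ
              (Submodule.comap (LinearMap.inl k C P) T).mkQ ∘ₗ dC ∧
        -- the map `θ : T → C/E`, `(c,p) ↦ c + E`, has kernel `(E,R)`, image `D/E`,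
        -- and is a coalgebra homomorphism; hence `T/(E,R) ≅ D/E` as coalgebras
        (let θ : ↥T →ₗ[k] C ⧸ Submodule.comap (LinearMap.inl k C P) T :=
          (Submodule.comap (LinearMap.inl k C P) T).mkQ ∘ₗ LinearMap.fst k C P ∘ₗ T.subtype
        LinearMap.ker θ = Submodule.comap T.subtype
            (Submodule.prod (Submodule.comap (LinearMap.inl k C P) T)
              (Submodule.comap (LinearMap.inr k C P) T)) ∧
        LinearMap.range θ = Submodule.map (Submodule.comap (LinearMap.inl k C P) T).mkQ
            (Submodule.map (LinearMap.fst k C P) T) ∧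
        dQ ∘ₗ θ = TensorProduct.map θ θ ∘ₗ dT) := by
  have hinj : Function.Injective (TensorProduct.map T.subtype T.subtype) :=
    map_injective_of_flat_flat _ _ T.injective_subtype T.injective_subtype
  let dT := LinearMap.codRestrictOfInjective (dorrohComul dC dP ρl ρr ∘ₗ T.subtype) _ hinj
    fun t => hT t t.2
  have hdT : TensorProduct.map T.subtype T.subtype ∘ₗ dT = dorrohComul dC dP ρl ρr ∘ₗ T.subtype :=
    LinearMap.codRestrictOfInjective_comp _ _ _ _
  have hdQ := (T.comap (LinearMap.inl k C P)).liftQ_mkQ _ (comap_inl_le_ker_map_mkQ_comp hT)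
  have hθ := comul_comp_quotFst hdT hdQ
  refine ⟨dT, hdT, fun t ht => ?_, _, hdQ, ker_quotFst T, range_quotFst T, hθ⟩
  rw [← ker_quotFst]
  exact isCoideal_ker hθ t (ker_quotFst T ▸ ht)

theorem stmt14 {k : Type*} [Field k] {C P : Type*} [AddCommGroup C] [Module k C]
    [AddCommGroup P] [Module k P]
    (dC : C →ₗ[k] C ⊗[k] C) (dP : P →ₗ[k] P ⊗[k] P)
    (ρl : P →ₗ[k] C ⊗[k] P) (ρr : P →ₗ[k] P ⊗[k] C)
    (hC : Coassoc dC) (hP : Coassoc dP)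
    -- `C` is counital with counit `εC`
    (εC : C →ₗ[k] k)
    (hcounit : ∀ c : C,
      (TensorProduct.lid k C) (TensorProduct.map εC LinearMap.id (dC c)) = c ∧
      (TensorProduct.rid k C) (TensorProduct.map LinearMap.id εC (dC c)) = c)
    (hl : (TensorProduct.assoc k C C P).toLinearMap ∘ₗ TensorProduct.map dC LinearMap.id ∘ₗ ρl
      = TensorProduct.map LinearMap.id ρl ∘ₗ ρl)
    (hr : TensorProduct.map LinearMap.id dC ∘ₗ ρr
      = (TensorProduct.assoc k P C C).toLinearMap ∘ₗ TensorProduct.map ρr LinearMap.id ∘ₗ ρr)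
    (hbi : TensorProduct.map LinearMap.id ρr ∘ₗ ρl
      = (TensorProduct.assoc k C P C).toLinearMap ∘ₗ TensorProduct.map ρl LinearMap.id ∘ₗ ρr)
    (c1 : TensorProduct.map LinearMap.id ρr ∘ₗ dP
      = (TensorProduct.assoc k P P C).toLinearMap ∘ₗ TensorProduct.map dP LinearMap.id ∘ₗ ρr)
    (c2 : (TensorProduct.assoc k C P P).toLinearMap ∘ₗ TensorProduct.map ρl LinearMap.id ∘ₗ dP
      = TensorProduct.map LinearMap.id dP ∘ₗ ρl)
    (c3 : (TensorProduct.assoc k P C P).toLinearMap ∘ₗ TensorProduct.map ρr LinearMap.id ∘ₗ dP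
      = TensorProduct.map LinearMap.id ρl ∘ₗ dP)
    -- `T` is a subcoalgebra of `C ⋉ P`
    (T : Submodule k (C × P))
    (hT : ∀ t ∈ T, dorrohComul dC dP ρl ρr t ∈
      LinearMap.range (TensorProduct.map T.subtype T.subtype)) :
    -- with `E = {c | (c,0) ∈ T}`, `D = π_C(T)`, `R = {p | (0,p) ∈ T}`:
    -- `T` carries a (unique) coalgebra structure `dT` restricting `Δ`,
    ∃ dT : ↥T →ₗ[k] ↥T ⊗[k] ↥T,
      TensorProduct.map T.subtype T.subtype ∘ₗ dT = dorrohComul dC dP ρl ρr ∘ₗ T.subtype ∧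
      -- `(E,R)` is a coideal of the coalgebra `T`
      (∀ t : ↥T, (↑t : C × P) ∈ Submodule.prod (Submodule.comap (LinearMap.inl k C P) T)
          (Submodule.comap (LinearMap.inr k C P) T) →
        dT t ∈
          LinearMap.range (TensorProduct.map
            (Submodule.comap T.subtype (Submodule.prod (Submodule.comap (LinearMap.inl k C P) T)
              (Submodule.comap (LinearMap.inr k C P) T))).subtype
            (LinearMap.id (R := k) (M := ↥T)))
          ⊔ LinearMap.range (TensorProduct.map (LinearMap.id (R := k) (M := ↥T))
            (Submodule.comap T.subtype (Submodule.prod (Submodule.comap (LinearMap.inl k C P) T)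
              (Submodule.comap (LinearMap.inr k C P) T))).subtype)) ∧
      -- `D/E` (inside `C/E`) carries the quotient coalgebra structure `dQ`
      ∃ dQ : (C ⧸ Submodule.comap (LinearMap.inl k C P) T) →ₗ[k]
          (C ⧸ Submodule.comap (LinearMap.inl k C P) T) ⊗[k]
          (C ⧸ Submodule.comap (LinearMap.inl k C P) T),
        dQ ∘ₗ (Submodule.comap (LinearMap.inl k C P) T).mkQ
          = TensorProduct.map (Submodule.comap (LinearMap.inl k C P) T).mkQ
              (Submodule.comap (LinearMap.inl k C P) T).mkQ ∘ₗ dC ∧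
        -- the map `θ : T → C/E`, `(c,p) ↦ c + E`, has kernel `(E,R)`, image `D/E`,
        -- and is a coalgebra homomorphism; hence `T/(E,R) ≅ D/E` as coalgebras
        (let θ : ↥T →ₗ[k] C ⧸ Submodule.comap (LinearMap.inl k C P) T :=
          (Submodule.comap (LinearMap.inl k C P) T).mkQ ∘ₗ LinearMap.fst k C P ∘ₗ T.subtype
        LinearMap.ker θ = Submodule.comap T.subtype
            (Submodule.prod (Submodule.comap (LinearMap.inl k C P) T)
              (Submodule.comap (LinearMap.inr k C P) T)) ∧
        LinearMap.range θ = Submodule.map (Submodule.comap (LinearMap.inl k C P) T).mkQ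
            (Submodule.map (LinearMap.fst k C P) T) ∧
        dQ ∘ₗ θ = TensorProduct.map θ θ ∘ₗ dT) :=
  stmt14_general dC dP ρl ρr T hT
end
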